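/- arXiv:1006.5602 — 5 statements merged into one kernel-verified Lean document; each statement's English description precedes it below -/
import Mathlib

section
/- Let ν be a Lévy measure on ℝ^d satisfying ν(A) ≤ ∫_S ∫_0^∞ 1_A(sθ) s^{−1−α} q(s) φ(s) ds μ(dθ) for all Borel A, where α ∈ (0,2), q and φ are bounded nonincreasing positive functions on [0,∞), μ is a finite nonnegative measure on the unit sphere S, γ ∈ [1,d], and μ(S ∩ B(θ,ρ)) ≤ c ρ^{γ−1} for all θ ∈ S, ρ > 0. Then there is a constant c' > 0 such that for every nonempty Borel set A ⊂ ℝ^d with δ(A) := dist(0,A) > 0 and finite diameter diam(A), ν(A) ≤ c' · δ(A)^{−γ−α} · q(δ(A)) · φ(δ(A)) · diam(A)^γ. -/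
open MeasureTheory Metric Set
open scoped ENNReal RealInnerProductSpace

noncomputable section

/-- `ℝ^d` with the Euclidean norm. -/
abbrev Euc (d : ℕ) := EuclideanSpace ℝ (Fin d)

/-- The characteristic function `ξ ↦ ∫ e^{i⟨ξ,y⟩} P(dy)` of a measure `P` on `ℝ^d`. -/
def charFn {d : ℕ} (P : Measure (Euc d)) (ξ : Euc d) : ℂ :=
  ∫ y, Complex.exp (Complex.I * (⟪ξ, y⟫ : ℝ)) ∂P

/-- The Lévy–Khinchin exponent
`Φ(ξ) = −∫ (e^{i⟨ξ,y⟩} − 1 − i⟨ξ,y⟩ 1_{B(0,1)}(y)) ν(dy) − i⟨ξ,b⟩`. -/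
def lkExp {d : ℕ} (ν : Measure (Euc d)) (b : Euc d) (ξ : Euc d) : ℂ :=
  -∫ y, (Complex.exp (Complex.I * (⟪ξ, y⟫ : ℝ)) - 1
      - Complex.I * (⟪ξ, y⟫ : ℝ) * ((ball (0 : Euc d) 1).indicator (fun _ => (1:ℝ)) y : ℂ)) ∂ν
    - Complex.I * (⟪ξ, b⟫ : ℝ)

/-- `ν` is a Lévy measure: `∫ min(1,|y|²) ν(dy) < ∞`. -/
def IsLevyMeasure {d : ℕ} (ν : Measure (Euc d)) : Prop :=
  ∫⁻ y, ENNReal.ofReal (min 1 (‖y‖ ^ 2)) ∂ν < ⊤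

/-- Assumption (i): `ν(A) ≤ ∫_S ∫_0^∞ 1_A(sθ) s^{−1−α} q(s) φ(s) ds μ(dθ)` for all Borel `A`. -/
def RadialDom {d : ℕ} (ν μ : Measure (Euc d)) (α : ℝ) (q φ : ℝ → ℝ) : Prop :=
  ∀ A : Set (Euc d), MeasurableSet A →
    ν A ≤ ∫⁻ θ, (∫⁻ s in Set.Ioi (0:ℝ),
      A.indicator (fun _ => (1:ℝ≥0∞)) (s • θ) * ENNReal.ofReal (s ^ (-1-α) * q s * φ s)) ∂μ

/-- A function `(0,∞) ∋ s ↦ q(s)` which is positive, bounded and nonincreasing on `[0,∞)`. -/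
def BddAnti (q : ℝ → ℝ) : Prop :=
  (∀ s, 0 ≤ s → 0 < q s) ∧ (∃ Cb, ∀ s, 0 ≤ s → q s ≤ Cb) ∧
    (∀ s t, 0 ≤ s → s ≤ t → q t ≤ q s)

/-- Assumption (vi): `μ` lives on the unit sphere and is a `(γ−1)`-measure there. -/
def GammaMeasure {d : ℕ} (μ : Measure (Euc d)) (γ cμ : ℝ) : Prop :=
  (μ (sphere (0 : Euc d) 1)ᶜ = 0) ∧
  ∀ θ : Euc d, ‖θ‖ = 1 → ∀ ρ > (0:ℝ),
    μ (sphere (0 : Euc d) 1 ∩ ball θ ρ) ≤ ENNReal.ofReal (cμ * ρ ^ (γ - 1))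

/-!
Every point of `A` has norm in `[δ, δ + diam A]`, so each ray `s ↦ sθ` meets `A` in a set of
length at most `diam A` on which the radial density `s^{-1-α} q(s) φ(s)` is at most its value
at `δ`. Moreover two points of `A` have directions at distance at most `2 diam A / δ`, so only
the directions in a spherical cap of radius `ρ ≍ diam A / δ` contribute, and the cap has
`μ`-measure `≲ ρ^{γ-1}`. Multiplying, `ν(A) ≲ δ^{-1-α} q(δ) φ(δ) diam A (diam A / δ)^{γ-1}`.
-/

namespace NormedSpace
variable {V : Type*} [NormedAddCommGroup V] [NormedSpace ℝ V]

theorem norm_normalize_le_one (x : V) : ‖normalize x‖ ≤ 1 := by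
  rcases eq_or_ne x 0 with rfl | hx
  · simp
  · exact (norm_normalize hx).le

theorem norm_normalize_sub_normalize_le {x : V} (hx : x ≠ 0) (y : V) :
    ‖normalize x - normalize y‖ ≤ 2 * ‖x - y‖ / ‖x‖ := by
  have hx' : 0 < ‖x‖ := norm_pos_iff.mpr hx
  have hsplit : normalize x - normalize y =
      ‖x‖⁻¹ • (x - y) + (‖x‖⁻¹ * (‖y‖ - ‖x‖)) • normalize y := by
    rw [mul_sub, sub_smul, mul_smul, norm_smul_normalize, inv_mul_cancel₀ hx'.ne', one_smul,
      smul_sub, normalize]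
    abel
  have hnorm : |‖y‖ - ‖x‖| ≤ ‖x - y‖ := by
    rw [abs_sub_comm]; exact abs_norm_sub_norm_le x y
  calc ‖normalize x - normalize y‖
      ≤ ‖x‖⁻¹ * ‖x - y‖ + ‖x‖⁻¹ * |‖y‖ - ‖x‖| * ‖normalize y‖ := by
        rw [hsplit]
        refine (norm_add_le _ _).trans_eq ?_
        rw [norm_smul, norm_smul, Real.norm_eq_abs, Real.norm_eq_abs, abs_mul,
          abs_of_pos (inv_pos.mpr hx')]
    _ ≤ ‖x‖⁻¹ * ‖x - y‖ + ‖x‖⁻¹ * ‖x - y‖ * 1 := by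
        gcongr
        exact norm_normalize_le_one y
    _ = 2 * ‖x - y‖ / ‖x‖ := by ring

theorem dist_normalize_le_of_mem {A : Set V} (hA : Bornology.IsBounded A)
    (hδ : 0 < infDist 0 A) {x y : V} (hx : x ∈ A) (hy : y ∈ A) :
    dist (normalize x) (normalize y) ≤ 2 * diam A / infDist 0 A := by
  have hδx : infDist 0 A ≤ ‖x‖ := by simpa using infDist_le_dist_of_mem (x := (0 : V)) hx
  have hx0 : x ≠ 0 := norm_pos_iff.mp (hδ.trans_le hδx)
  calc dist (normalize x) (normalize y) ≤ 2 * ‖x - y‖ / ‖x‖ := by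
        rw [dist_eq_norm]; exact norm_normalize_sub_normalize_le hx0 y
    _ ≤ 2 * diam A / infDist 0 A := by
        rw [← dist_eq_norm]
        gcongr
        exact dist_le_diam_of_mem hA hx hy

end NormedSpace

section
variable {V : Type*} [NormedAddCommGroup V] [NormedSpace ℝ V]

theorem setLIntegral_indicator_smul_le {A : Set V} (hA : Bornology.IsBounded A) {θ : V}
    (hθ : ‖θ‖ = 1) {f : ℝ → ℝ} (hf : ∀ s, infDist 0 A ≤ s → f s ≤ f (infDist 0 A)) :
    ∫⁻ s in Ioi (0:ℝ), A.indicator (fun _ => (1:ℝ≥0∞)) (s • θ) * ENNReal.ofReal (f s) ≤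
      ENNReal.ofReal (f (infDist 0 A) * diam A) := by
  set δ := infDist (0 : V) A
  have hbound : ∀ s ∈ Ioi (0:ℝ), A.indicator (fun _ => (1:ℝ≥0∞)) (s • θ) *
      ENNReal.ofReal (f s) ≤ (Icc δ (δ + diam A)).indicator (fun _ => ENNReal.ofReal (f δ)) s := by
    intro s hs
    by_cases hsA : s • θ ∈ A
    · have hnorm : ‖s • θ‖ = s := by rw [norm_smul, hθ, mul_one, Real.norm_of_nonneg hs.out.le]
      have hlow : δ ≤ s := by simpa [hnorm] using infDist_le_dist_of_mem (x := (0 : V)) hsA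
      have hupp : s ≤ δ + diam A := by
        simpa [hnorm] using dist_le_infDist_add_diam (x := (0 : V)) hA hsA
      rw [indicator_of_mem hsA, indicator_of_mem (mem_Icc.mpr ⟨hlow, hupp⟩), one_mul]
      exact ENNReal.ofReal_le_ofReal (hf s hlow)
    · simp [hsA]
  calc _ ≤ ∫⁻ s in Ioi (0:ℝ), (Icc δ (δ + diam A)).indicator (fun _ => ENNReal.ofReal (f δ)) s :=
        setLIntegral_mono (measurable_const.indicator measurableSet_Icc) hbound
    _ ≤ ∫⁻ s, (Icc δ (δ + diam A)).indicator (fun _ => ENNReal.ofReal (f δ)) s :=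
        setLIntegral_le_lintegral _ _
    _ = ENNReal.ofReal (f δ * diam A) := by
        rw [lintegral_indicator_const measurableSet_Icc, Real.volume_Icc, add_sub_cancel_left,
          ENNReal.ofReal_mul' diam_nonneg]

theorem setLIntegral_indicator_smul_le_indicator_cap {A : Set V} (hA : Bornology.IsBounded A)
    (hδ : 0 < infDist 0 A) {x₀ : V} (hx₀ : x₀ ∈ A) {ρ : ℝ}
    (hρ : 2 * diam A / infDist 0 A < ρ) {θ : V} (hθ : ‖θ‖ = 1) {f : ℝ → ℝ}
    (hf : ∀ s, infDist 0 A ≤ s → f s ≤ f (infDist 0 A)) :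
    ∫⁻ s in Ioi (0:ℝ), A.indicator (fun _ => (1:ℝ≥0∞)) (s • θ) * ENNReal.ofReal (f s) ≤
      (sphere 0 1 ∩ ball (NormedSpace.normalize x₀) ρ).indicator
        (fun _ => ENNReal.ofReal (f (infDist 0 A) * diam A)) θ := by
  by_cases hθρ : θ ∈ ball (NormedSpace.normalize x₀) ρ
  · rw [indicator_of_mem (mem_inter (mem_sphere_zero_iff_norm.mpr hθ) hθρ)]
    exact setLIntegral_indicator_smul_le hA hθ hf
  · rw [indicator_of_notMem fun h => hθρ h.2, nonpos_iff_eq_zero]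
    have hmiss : ∀ s ∈ Ioi (0:ℝ), s • θ ∉ A := by
      intro s hs hsA
      have hdir : NormedSpace.normalize (s • θ) = θ := by
        rw [NormedSpace.normalize_smul_of_pos hs, NormedSpace.normalize_eq_self_of_norm_eq_one hθ]
      refine hθρ (mem_ball.mpr ?_)
      rw [← hdir]
      exact (NormedSpace.dist_normalize_le_of_mem hA hδ hsA hx₀).trans_lt hρ
    calc _ = ∫⁻ _ in Ioi (0:ℝ), (0:ℝ≥0∞) :=
          setLIntegral_congr_fun measurableSet_Ioi fun s hs => by simp [hmiss s hs]
      _ = 0 := lintegral_zero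

end

theorem BddAnti.rpow_mul_mul_le_of_le {α : ℝ} (hα : -1 ≤ α) {q φ : ℝ → ℝ} (hq : BddAnti q)
    (hφ : BddAnti φ) {δ s : ℝ} (hδ : 0 < δ) (hs : δ ≤ s) :
    s ^ (-1-α) * q s * φ s ≤ δ ^ (-1-α) * q δ * φ δ := by
  have hs₀ : 0 ≤ s := hδ.le.trans hs
  have hqδ := hq.1 δ hδ.le
  have hqs := hq.1 s hs₀
  have hφs := hφ.1 s hs₀
  gcongr ?_ * ?_ * ?_
  · exact Real.rpow_le_rpow_of_nonpos hδ hs (by linarith)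
  · exact hq.2.2 δ s hδ.le hs
  · exact hφ.2.2 δ s hδ.le hs

theorem RadialDom.measure_le_mul_measure_cap {d : ℕ} {ν μ : Measure (Euc d)} {α : ℝ}
    {q φ : ℝ → ℝ} (hdom : RadialDom ν μ α q φ) (hμ : μ (sphere (0 : Euc d) 1)ᶜ = 0)
    {A : Set (Euc d)} (hA : MeasurableSet A) (hbd : Bornology.IsBounded A)
    (hδ : 0 < infDist 0 A) {x₀ : Euc d} (hx₀ : x₀ ∈ A) {ρ : ℝ}
    (hρ : 2 * diam A / infDist 0 A < ρ)
    (hdensity : ∀ s, infDist 0 A ≤ s →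
      s ^ (-1-α) * q s * φ s ≤ infDist 0 A ^ (-1-α) * q (infDist 0 A) * φ (infDist 0 A)) :
    ν A ≤ ENNReal.ofReal (infDist 0 A ^ (-1-α) * q (infDist 0 A) * φ (infDist 0 A) * diam A) *
      μ (sphere 0 1 ∩ ball (NormedSpace.normalize x₀) ρ) := by
  have hsphere : ∀ᵐ θ ∂μ, θ ∈ sphere (0 : Euc d) 1 := mem_ae_iff.mpr hμ
  calc ν A ≤ _ := hdom A hA
    _ ≤ ∫⁻ θ, (sphere 0 1 ∩ ball (NormedSpace.normalize x₀) ρ).indicator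
          (fun _ => ENNReal.ofReal
            (infDist 0 A ^ (-1-α) * q (infDist 0 A) * φ (infDist 0 A) * diam A)) θ ∂μ := by
        refine lintegral_mono_ae (hsphere.mono fun θ hθ => ?_)
        exact setLIntegral_indicator_smul_le_indicator_cap (f := fun s => s ^ (-1-α) * q s * φ s)
          hbd hδ hx₀ hρ (mem_sphere_zero_iff_norm.mp hθ) hdensity
    _ = _ := lintegral_indicator_const (isClosed_sphere.measurableSet.inter measurableSet_ball) _

theorem rpow_mul_mul_div_rpow_sub_one {δ D : ℝ} (hδ : 0 < δ) (hD : 0 < D) {c : ℝ} (hc : 0 ≤ c)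
    (α γ : ℝ) :
    δ ^ (-1-α) * D * (c * D / δ) ^ (γ - 1) = c ^ (γ - 1) * δ ^ (-γ-α) * D ^ γ := by
  have hδpow : δ ^ (-γ-α) = δ ^ (-1-α) / δ ^ (γ - 1) := by
    rw [← Real.rpow_sub hδ]; ring_nf
  have hDpow : D ^ γ = D * D ^ (γ - 1) := by
    conv_lhs => rw [← add_sub_cancel (1:ℝ) γ, Real.rpow_add hD, Real.rpow_one]
  rw [Real.div_rpow (by positivity) hδ.le, Real.mul_rpow hc hD.le, hδpow, hDpow]
  ring

theorem statement4_general {d : ℕ} (α γ cμ : ℝ) (hα : 0 < α) (hcμ : 0 ≤ cμ)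
    (q φ : ℝ → ℝ) (hq : BddAnti q) (hφ : BddAnti φ) (ν μ : Measure (Euc d))
    (hdom : RadialDom ν μ α q φ) (hμγ : GammaMeasure μ γ cμ) :
    ∃ c' > (0:ℝ), ∀ A : Set (Euc d), MeasurableSet A → A.Nonempty →
      Bornology.IsBounded A → 0 < infDist (0 : Euc d) A →
      ν A ≤ ENNReal.ofReal (c' * infDist (0 : Euc d) A ^ (-γ-α) *
        q (infDist (0 : Euc d) A) * φ (infDist (0 : Euc d) A) * diam A ^ γ) := by
  refine ⟨3 ^ (γ - 1) * cμ + 1, by positivity, fun A hA ⟨x₀, hx₀⟩ hbd hδ => ?_⟩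
  set δ := infDist (0 : Euc d) A
  have hdensity : ∀ s, δ ≤ s → s ^ (-1-α) * q s * φ s ≤ δ ^ (-1-α) * q δ * φ δ :=
    fun s hs => BddAnti.rpow_mul_mul_le_of_le (by linarith) hq hφ hδ hs
  rcases (diam_nonneg (s := A)).eq_or_lt with hD | hD
  · have hνA := hdom.measure_le_mul_measure_cap hμγ.1 hA hbd hδ hx₀ (ρ := 1)
      (by rw [← hD]; norm_num) hdensity
    rw [← hD, mul_zero, ENNReal.ofReal_zero, zero_mul] at hνA
    exact hνA.trans zero_le
  have hx₀ne : x₀ ≠ 0 := by rintro rfl; exact hδ.ne' (infDist_zero_of_mem hx₀)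
  have hqδ := hq.1 δ hδ.le
  have hφδ := hφ.1 δ hδ.le
  calc ν A ≤ ENNReal.ofReal (δ ^ (-1-α) * q δ * φ δ * diam A) *
        μ (sphere 0 1 ∩ ball (NormedSpace.normalize x₀) (3 * diam A / δ)) :=
        hdom.measure_le_mul_measure_cap hμγ.1 hA hbd hδ hx₀ (by gcongr; norm_num) hdensity
    _ ≤ ENNReal.ofReal (δ ^ (-1-α) * q δ * φ δ * diam A) *
        ENNReal.ofReal (cμ * (3 * diam A / δ) ^ (γ - 1)) := by
        gcongr
        exact hμγ.2 _ (NormedSpace.norm_normalize hx₀ne) _ (by positivity)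
    _ = ENNReal.ofReal (3 ^ (γ - 1) * cμ * (δ ^ (-γ-α) * q δ * φ δ * diam A ^ γ)) := by
        rw [← ENNReal.ofReal_mul (by positivity)]
        congr 1
        linear_combination (q δ * φ δ * cμ) * rpow_mul_mul_div_rpow_sub_one hδ hD
          (by norm_num : (0:ℝ) ≤ 3) α γ
    _ ≤ _ := by
        refine ENNReal.ofReal_le_ofReal ?_
        have hX : 0 ≤ δ ^ (-γ-α) * q δ * φ δ * diam A ^ γ := by positivity
        linarith

/-- estimate (11). Under the radial domination (i) and the `(γ−1)`-measure
condition (vi), there is `c' > 0` such that for every Borel set `A` with `δ(A) > 0` and finite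
diameter, `ν(A) ≤ c' δ(A)^{−γ−α} q(δ(A)) φ(δ(A)) diam(A)^γ`. -/
theorem statement4 {d : ℕ} (α γ cμ : ℝ) (hα : 0 < α) (hα2 : α < 2)
    (hγ1 : 1 ≤ γ) (hγd : γ ≤ (d : ℝ)) (hcμ : 0 ≤ cμ)
    (q φ : ℝ → ℝ) (hq : BddAnti q) (hφ : BddAnti φ)
    (ν μ : Measure (Euc d)) [IsFiniteMeasure μ] (hlevy : IsLevyMeasure ν)
    (hdom : RadialDom ν μ α q φ) (hμγ : GammaMeasure μ γ cμ) :
    ∃ c' > (0:ℝ), ∀ A : Set (Euc d), MeasurableSet A → A.Nonempty →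
      Bornology.IsBounded A → 0 < infDist (0 : Euc d) A →
      ν A ≤ ENNReal.ofReal (c' * infDist (0 : Euc d) A ^ (-γ-α) *
        q (infDist (0 : Euc d) A) * φ (infDist (0 : Euc d) A) * diam A ^ γ) :=
  statement4_general α γ cμ hα hcμ q φ hq hφ ν μ hdom hμγ

end
end

section
/- Let a > v ≥ 0 and let f : (0,∞) → [0,∞) be a measurable nonnegative function such that ∫_0^r s^a f(s) ds ≤ c₁ r^v for all r ≥ r₀, for some constants c₁, r₀ > 0. Then ∫_r^∞ f(s) ds ≤ (c₁ a / (a − v)) · r^{v−a} for all r ≥ r₀. -/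
open MeasureTheory Set
open scoped ENNReal

/-! For `s > 0`, `f s = s ^ a * f s * ∫_s^∞ a t^(-a-1) dt`. Integrating over `s > r` and swapping
the order of integration over the triangle `r < s < t` gives
`∫_r^∞ f = ∫_r^∞ a t^(-a-1) (∫_r^t s^a f(s) ds) dt ≤ c₁ a ∫_r^∞ t^(v-a-1) dt = c₁ a r^(v-a) / (a-v)`. -/

section TriangleSwap

variable {α : Type*} [LinearOrder α] [TopologicalSpace α] [OrderClosedTopology α]
  [SecondCountableTopology α] [MeasurableSpace α] [OpensMeasurableSpace α]
  {μ ν : Measure α} [SFinite μ] [SFinite ν] {F : α → α → ℝ≥0∞}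

theorem lintegral_lintegral_Ioi_swap (hF : Measurable (Function.uncurry F)) :
    ∫⁻ s, ∫⁻ t in Ioi s, F s t ∂ν ∂μ = ∫⁻ t, ∫⁻ s in Iio t, F s t ∂μ ∂ν := by
  set G := {p : α × α | p.1 < p.2}.indicator (Function.uncurry F)
  have hG : Measurable G := hF.indicator (measurableSet_lt measurable_fst measurable_snd)
  calc ∫⁻ s, ∫⁻ t in Ioi s, F s t ∂ν ∂μ = ∫⁻ s, ∫⁻ t, G (s, t) ∂ν ∂μ := by
        simp_rw [← lintegral_indicator measurableSet_Ioi]; rfl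
    _ = ∫⁻ t, ∫⁻ s, G (s, t) ∂μ ∂ν := lintegral_lintegral_swap hG.aemeasurable
    _ = ∫⁻ t, ∫⁻ s in Iio t, F s t ∂μ ∂ν := by
        simp_rw [← lintegral_indicator measurableSet_Iio]; rfl

theorem setLIntegral_Ioi_lintegral_Ioi_swap (hF : Measurable (Function.uncurry F)) (r : α) :
    ∫⁻ s in Ioi r, ∫⁻ t in Ioi s, F s t ∂ν ∂μ = ∫⁻ t in Ioi r, ∫⁻ s in Ioo r t, F s t ∂μ ∂ν := by
  rw [lintegral_lintegral_Ioi_swap hF, ← setLIntegral_eq_of_support_subset (s := Ioi r)]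
  · simp_rw [Measure.restrict_restrict measurableSet_Iio, Iio_inter_Ioi]
  · refine Function.support_subset_iff'.2 fun t ht => ?_
    rw [Measure.restrict_restrict measurableSet_Iio, Iio_inter_Ioi, Ioo_eq_empty ht,
      Measure.restrict_empty, lintegral_zero_measure]

end TriangleSwap

theorem lintegral_Ioi_rpow_of_lt {p : ℝ} (hp : p < -1) {c : ℝ} (hc : 0 < c) :
    ∫⁻ t in Ioi c, ENNReal.ofReal (t ^ p) = ENNReal.ofReal (-c ^ (p + 1) / (p + 1)) := by
  rw [← integral_Ioi_rpow_of_lt hp hc,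
    ofReal_integral_eq_lintegral_ofReal (integrableOn_Ioi_rpow_of_lt hp hc)]
  filter_upwards [ae_restrict_mem measurableSet_Ioi] with t ht
  exact Real.rpow_nonneg (hc.trans ht).le p

theorem lintegral_Ioi_const_mul_rpow_of_lt {p : ℝ} (hp : p < -1) {c : ℝ} (hc : 0 < c) (K : ℝ) :
    ∫⁻ t in Ioi c, ENNReal.ofReal (K * t ^ p) =
      ENNReal.ofReal (K * (-c ^ (p + 1) / (p + 1))) := by
  calc ∫⁻ t in Ioi c, ENNReal.ofReal (K * t ^ p)
      = ∫⁻ t in Ioi c, ENNReal.ofReal K * ENNReal.ofReal (t ^ p) :=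
        setLIntegral_congr_fun measurableSet_Ioi fun t ht =>
          ENNReal.ofReal_mul' (Real.rpow_nonneg (hc.trans ht).le p)
    _ = ENNReal.ofReal K * ENNReal.ofReal (-c ^ (p + 1) / (p + 1)) := by
        rw [lintegral_const_mul' _ _ ENNReal.ofReal_ne_top, lintegral_Ioi_rpow_of_lt hp hc]
    _ = ENNReal.ofReal (K * (-c ^ (p + 1) / (p + 1))) :=
        (ENNReal.ofReal_mul' (div_nonneg_of_nonpos
          (neg_nonpos.2 (Real.rpow_nonneg hc.le _)) (by linarith))).symm

theorem lintegral_Ioi_mul_rpow_neg_sub_one {a : ℝ} (ha : 0 < a) {s : ℝ} (hs : 0 < s) :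
    ∫⁻ t in Ioi s, ENNReal.ofReal (a * t ^ (-a - 1)) = ENNReal.ofReal (s ^ (-a)) := by
  rw [lintegral_Ioi_const_mul_rpow_of_lt (by linarith) hs, sub_add_cancel]
  congr 1
  field_simp

theorem ofReal_eq_lintegral_Ioi_mul_rpow_mul {a : ℝ} (ha : 0 < a) {s : ℝ} (hs : 0 < s) (y : ℝ) :
    ENNReal.ofReal y =
      ∫⁻ t in Ioi s, ENNReal.ofReal (a * t ^ (-a - 1)) * ENNReal.ofReal (s ^ a * y) := by
  rw [lintegral_mul_const _ (by fun_prop), lintegral_Ioi_mul_rpow_neg_sub_one ha hs,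
    ← ENNReal.ofReal_mul (by positivity), ← mul_assoc, ← Real.rpow_add hs, neg_add_cancel,
    Real.rpow_zero, one_mul]

theorem lintegral_Ioi_mul_rpow_neg_sub_one_mul_rpow {a v : ℝ} (ha : 0 ≤ a) (hav : v < a) {r : ℝ}
    (hr : 0 < r) (c : ℝ) : ∫⁻ t in Ioi r, ENNReal.ofReal (a * t ^ (-a - 1)) * ENNReal.ofReal (c * t ^ v) =
      ENNReal.ofReal (c * a / (a - v) * r ^ (v - a)) := by
  calc ∫⁻ t in Ioi r, ENNReal.ofReal (a * t ^ (-a - 1)) * ENNReal.ofReal (c * t ^ v)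
      = ∫⁻ t in Ioi r, ENNReal.ofReal (c * a * t ^ (v - a - 1)) := by
        refine setLIntegral_congr_fun measurableSet_Ioi fun t ht => ?_
        have ht0 : 0 < t := hr.trans ht
        rw [← ENNReal.ofReal_mul (by positivity)]
        congr 1
        rw [show v - a - 1 = (-a - 1) + v by ring, Real.rpow_add ht0]
        ring
    _ = ENNReal.ofReal (c * a / (a - v) * r ^ (v - a)) := by
        rw [lintegral_Ioi_const_mul_rpow_of_lt (by linarith) hr, sub_add_cancel]
        have hva : v - a ≠ 0 := by linarith
        have hav' : a - v ≠ 0 := by linarith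
        congr 1
        field_simp
        ring

theorem statement8_general (a v : ℝ) (hv : 0 ≤ v) (hav : v < a)
    (f : ℝ → ℝ) (hf : Measurable f) (c₁ r₀ : ℝ) (hr₀ : 0 < r₀)
    (hbound : ∀ r : ℝ, r₀ ≤ r →
      ∫⁻ s in Set.Ioc (0:ℝ) r, ENNReal.ofReal (s ^ a * f s) ≤ ENNReal.ofReal (c₁ * r ^ v)) :
    ∀ r : ℝ, r₀ ≤ r →
      ∫⁻ s in Set.Ioi r, ENNReal.ofReal (f s) ≤
        ENNReal.ofReal (c₁ * a / (a - v) * r ^ (v - a)) := by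
  intro r hr
  have ha : 0 < a := hv.trans_lt hav
  have hr0 : 0 < r := hr₀.trans_le hr
  set g : ℝ → ℝ≥0∞ := fun s => ENNReal.ofReal (s ^ a * f s)
  set w : ℝ → ℝ≥0∞ := fun t => ENNReal.ofReal (a * t ^ (-a - 1))
  calc ∫⁻ s in Ioi r, ENNReal.ofReal (f s)
      = ∫⁻ s in Ioi r, ∫⁻ t in Ioi s, w t * g s :=
        setLIntegral_congr_fun measurableSet_Ioi fun s hs =>
          ofReal_eq_lintegral_Ioi_mul_rpow_mul ha (hr0.trans hs) (f s)
    _ = ∫⁻ t in Ioi r, ∫⁻ s in Ioo r t, w t * g s :=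
        setLIntegral_Ioi_lintegral_Ioi_swap (by fun_prop) r
    _ ≤ ∫⁻ t in Ioi r, w t * ENNReal.ofReal (c₁ * t ^ v) := by
        refine setLIntegral_mono' measurableSet_Ioi fun t ht => ?_
        rw [lintegral_const_mul _ (by fun_prop)]
        gcongr
        calc ∫⁻ s in Ioo r t, g s ≤ ∫⁻ s in Ioc 0 t, g s :=
              lintegral_mono_set fun s hs => ⟨hr0.trans hs.1, hs.2.le⟩
          _ ≤ ENNReal.ofReal (c₁ * t ^ v) := hbound t (hr.trans ht.le)
    _ = ENNReal.ofReal (c₁ * a / (a - v) * r ^ (v - a)) :=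
        lintegral_Ioi_mul_rpow_neg_sub_one_mul_rpow ha.le hav hr0 c₁

/-- Lemma 4. If `a > v ≥ 0` and `f ≥ 0` is measurable on `(0,∞)` with
`∫_0^r s^a f(s) ds ≤ c₁ r^v` for all `r ≥ r₀`, then
`∫_r^∞ f(s) ds ≤ (c₁ a/(a−v)) r^{v−a}` for all `r ≥ r₀`. -/
theorem statement8 (a v : ℝ) (hv : 0 ≤ v) (hav : v < a)
    (f : ℝ → ℝ) (hf : Measurable f) (hfnn : ∀ s : ℝ, 0 < s → 0 ≤ f s)
    (c₁ r₀ : ℝ) (hc₁ : 0 < c₁) (hr₀ : 0 < r₀)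
    (hbound : ∀ r : ℝ, r₀ ≤ r →
      ∫⁻ s in Set.Ioc (0:ℝ) r, ENNReal.ofReal (s ^ a * f s) ≤ ENNReal.ofReal (c₁ * r ^ v)) :
    ∀ r : ℝ, r₀ ≤ r →
      ∫⁻ s in Set.Ioi r, ENNReal.ofReal (f s) ≤
        ENNReal.ofReal (c₁ * a / (a - v) * r ^ (v - a)) :=
  statement8_general a v hv hav f hf c₁ r₀ hr₀ hbound
end

section
/- Let ν be a Lévy measure on ℝ^d satisfying assumptions (i), (iii), (iv) below with q bounded. Then there exists a constant C > 0 such that ν(B(0,r)^c) ≤ C r^{−α} for all 0 < r ≤ 1 and ν(B(0,r)^c) ≤ C r^{−β} for all r > 1. -/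
open MeasureTheory Metric Set
open scoped ENNReal RealInnerProductSpace

noncomputable section

/-!
Integrating the radial domination (i) along the rays `s ↦ sθ`, `θ ∈ S`, and using that `q φ` is
nonincreasing gives `ν(B(0,r)ᶜ) ≤ μ(S) q(r) φ(r) r^{-α} / α`. For `r ≤ 1` bound `q(r) φ(r)` by
`q(0) φ(0)`. For `r > 1`, the integrand of (iv) is at least a fixed multiple of
`r^{1-α} q(r) φ(r) / φ(0)` on `(r/2, r]`, so (iv) forces `q(r) φ(r) ≲ r^{α-β}`.
-/

lemma lintegral_Ici_rpow_neg_one_sub {α r : ℝ} (hα : 0 < α) (hr : 0 < r) :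
    ∫⁻ s in Ici r, ENNReal.ofReal (s ^ (-1 - α)) = ENNReal.ofReal (r ^ (-α) / α) := by
  rw [← setLIntegral_congr Ioi_ae_eq_Ici, ← ofReal_integral_eq_lintegral_ofReal
    (integrableOn_Ioi_rpow_of_lt (by linarith) hr)
    ((ae_restrict_mem measurableSet_Ioi).mono fun s hs => Real.rpow_nonneg (hr.trans hs).le _),
    integral_Ioi_rpow_of_lt (by linarith) hr]
  congr 1
  rw [show -1 - α + 1 = -α by ring, neg_div_neg_eq]

lemma rpow_min_le_of_mem_Icc {a b s : ℝ} (ha : 0 < a) (hs : s ∈ Icc a b) (p : ℝ) :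
    min (a ^ p) (b ^ p) ≤ s ^ p := by
  rcases le_total 0 p with hp | hp
  · exact (min_le_left _ _).trans (Real.rpow_le_rpow ha.le hs.1 hp)
  · exact (min_le_right _ _).trans (Real.rpow_le_rpow_of_nonpos (ha.trans_le hs.1) hs.2 hp)

namespace BddAnti

variable {q : ℝ → ℝ}

lemma pos (hq : BddAnti q) {s : ℝ} (hs : 0 ≤ s) : 0 < q s := hq.1 s hs

lemma antitoneOn (hq : BddAnti q) : AntitoneOn q (Ici 0) :=
  fun s hs t _ hst => hq.2.2 s t hs hst

lemma apply_le_apply_zero (hq : BddAnti q) {s : ℝ} (hs : 0 ≤ s) : q s ≤ q 0 :=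
  hq.antitoneOn self_mem_Ici hs hs

lemma mul {φ : ℝ → ℝ} (hq : BddAnti q) (hφ : BddAnti φ) : BddAnti fun s => q s * φ s :=
  ⟨fun _ hs => mul_pos (hq.pos hs) (hφ.pos hs),
    ⟨q 0 * φ 0, fun _ hs => mul_le_mul (hq.apply_le_apply_zero hs) (hφ.apply_le_apply_zero hs)
      (hφ.pos hs).le (hq.pos le_rfl).le⟩,
    fun _ _ hs hst => mul_le_mul (hq.antitoneOn hs (hs.trans hst) hst)
      (hφ.antitoneOn hs (hs.trans hst) hst) (hφ.pos (hs.trans hst)).le (hq.pos hs).le⟩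

end BddAnti

lemma lintegral_Ioi_indicator_compl_ball_smul {E : Type*} [NormedAddCommGroup E]
    [NormedSpace ℝ E] {θ : E} (hθ : ‖θ‖ = 1) {r : ℝ} (hr : 0 < r) (f : ℝ → ℝ≥0∞) :
    ∫⁻ s in Ioi 0, (ball (0 : E) r)ᶜ.indicator (fun _ => (1 : ℝ≥0∞)) (s • θ) * f s
      = ∫⁻ s in Ici r, f s := by
  have hray : ∀ s ∈ Ioi (0 : ℝ),
      (ball (0 : E) r)ᶜ.indicator (fun _ => (1 : ℝ≥0∞)) (s • θ) * f s = (Ici r).indicator f s := by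
    intro s hs
    have hmem : s • θ ∈ (ball (0 : E) r)ᶜ ↔ s ∈ Ici r := by
      rw [mem_compl_iff, mem_ball_zero_iff, norm_smul, hθ, mul_one, Real.norm_of_nonneg
        (le_of_lt hs), not_lt, mem_Ici]
    by_cases hs' : s ∈ Ici r <;> simp [hmem, hs']
  rw [setLIntegral_congr_fun measurableSet_Ioi hray, lintegral_indicator measurableSet_Ici,
    Measure.restrict_restrict measurableSet_Ici,
    inter_eq_self_of_subset_left (Ici_subset_Ioi.2 hr)]

lemma lintegral_Ici_rpow_mul_le {α r : ℝ} (hα : 0 < α) (hr : 0 < r) {g : ℝ → ℝ}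
    (hg : AntitoneOn g (Ici r)) :
    ∫⁻ s in Ici r, ENNReal.ofReal (s ^ (-1 - α) * g s) ≤ ENNReal.ofReal (r ^ (-α) / α * g r) :=
  calc ∫⁻ s in Ici r, ENNReal.ofReal (s ^ (-1 - α) * g s)
      ≤ ∫⁻ s in Ici r, ENNReal.ofReal (s ^ (-1 - α)) * ENNReal.ofReal (g r) := by
        refine setLIntegral_mono' measurableSet_Ici fun s hs => ?_
        rw [← ENNReal.ofReal_mul (Real.rpow_nonneg (hr.trans_le hs).le _)]
        gcongr
        · exact Real.rpow_nonneg (hr.trans_le hs).le _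
        · exact hg self_mem_Ici hs hs
    _ = ENNReal.ofReal (r ^ (-α) / α * g r) := by
        rw [lintegral_mul_const' _ _ ENNReal.ofReal_ne_top, lintegral_Ici_rpow_neg_one_sub hα hr,
          ← ENNReal.ofReal_mul (by positivity)]

lemma RadialDom.measure_compl_ball_le {d : ℕ} {ν μ : Measure (Euc d)} [IsFiniteMeasure μ]
    {α : ℝ} {q φ : ℝ → ℝ} (hdom : RadialDom ν μ α q φ) (hμ : μ (sphere (0 : Euc d) 1)ᶜ = 0)
    (hα : 0 < α) (hq : BddAnti q) (hφ : BddAnti φ) {r : ℝ} (hr : 0 < r) :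
    ν (ball (0 : Euc d) r)ᶜ ≤ ENNReal.ofReal ((μ univ).toReal / α * (q r * φ r * r ^ (-α))) := by
  have hray : ∀ θ ∈ sphere (0 : Euc d) 1,
      ∫⁻ s in Ioi 0, (ball (0 : Euc d) r)ᶜ.indicator (fun _ => (1 : ℝ≥0∞)) (s • θ) *
        ENNReal.ofReal (s ^ (-1 - α) * q s * φ s)
        ≤ ENNReal.ofReal (r ^ (-α) / α * (q r * φ r)) := by
    intro θ hθ
    rw [lintegral_Ioi_indicator_compl_ball_smul (mem_sphere_zero_iff_norm.1 hθ) hr]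
    simp only [mul_assoc]
    exact lintegral_Ici_rpow_mul_le hα hr ((hq.mul hφ).antitoneOn.mono (Ici_subset_Ici.2 hr.le))
  have hae : ∀ᵐ θ ∂μ, θ ∈ sphere (0 : Euc d) 1 := mem_ae_iff.2 hμ
  calc ν (ball (0 : Euc d) r)ᶜ ≤ _ := hdom _ measurableSet_ball.compl
    _ ≤ ∫⁻ _, ENNReal.ofReal (r ^ (-α) / α * (q r * φ r)) ∂μ := lintegral_mono_ae (hae.mono hray)
    _ = ENNReal.ofReal (r ^ (-α) / α * (q r * φ r)) * ENNReal.ofReal (μ univ).toReal := by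
        rw [lintegral_const, ENNReal.ofReal_toReal (measure_ne_top μ univ)]
    _ = ENNReal.ofReal ((μ univ).toReal / α * (q r * φ r * r ^ (-α))) := by
        rw [← ENNReal.ofReal_mul' ENNReal.toReal_nonneg]
        ring_nf

lemma min_one_two_rpow_neg_mul_le_rpow {r s : ℝ} (hr : 0 < r) (hs : s ∈ Icc (r / 2) r) (p : ℝ) :
    min 1 ((2 : ℝ) ^ (-p)) * r ^ p ≤ s ^ p := by
  have hhalf : (r / 2) ^ p = (2 : ℝ) ^ (-p) * r ^ p := by
    rw [Real.div_rpow hr.le zero_le_two, Real.rpow_neg zero_le_two, div_eq_inv_mul]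
  calc min 1 ((2 : ℝ) ^ (-p)) * r ^ p = min ((r / 2) ^ p) (r ^ p) := by
        rw [min_mul_of_nonneg _ _ (Real.rpow_nonneg hr.le p), one_mul, hhalf, min_comm]
    _ ≤ s ^ p := rpow_min_le_of_mem_Icc (half_pos hr) hs p

lemma ofReal_le_lintegral_Ioc_rpow_mul_div {α : ℝ} {q φ : ℝ → ℝ} (hq : BddAnti q)
    (hφ : BddAnti φ) {r : ℝ} (hr : 0 < r) :
    ENNReal.ofReal (min 1 ((2 : ℝ) ^ (-(1 - α))) * r ^ (1 - α) * q r * (φ r / φ 0) * (r / 2)) ≤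
      ∫⁻ s in Ioc 0 r, ENNReal.ofReal (s ^ (1 - α) * q s * (φ s / φ (s / 2))) := by
  have hqr := hq.pos hr.le
  have hφr := hφ.pos hr.le
  have hφ0 := hφ.pos le_rfl
  have hlow : ∀ s ∈ Ioc (r / 2) r, min 1 ((2 : ℝ) ^ (-(1 - α))) * r ^ (1 - α) * q r * (φ r / φ 0)
      ≤ s ^ (1 - α) * q s * (φ s / φ (s / 2)) := by
    intro s hs
    have hs0 : 0 ≤ s := (half_pos hr).le.trans hs.1.le
    have hs2 : 0 ≤ s / 2 := by positivity
    have hqs := hq.pos hs0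
    have hφs := hφ.pos hs0
    have hφs2 := hφ.pos hs2
    gcongr
    · exact min_one_two_rpow_neg_mul_le_rpow hr (Ioc_subset_Icc_self hs) _
    · exact hq.antitoneOn hs0 hr.le hs.2
    · exact hφ.antitoneOn hs0 hr.le hs.2
    · exact hφ.apply_le_apply_zero hs2
  calc ENNReal.ofReal (min 1 ((2 : ℝ) ^ (-(1 - α))) * r ^ (1 - α) * q r * (φ r / φ 0) * (r / 2))
      = ∫⁻ _ in Ioc (r / 2) r,
          ENNReal.ofReal (min 1 ((2 : ℝ) ^ (-(1 - α))) * r ^ (1 - α) * q r * (φ r / φ 0)) := by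
        rw [setLIntegral_const, Real.volume_Ioc, ← ENNReal.ofReal_mul (by positivity)]
        ring_nf
    _ ≤ ∫⁻ s in Ioc (r / 2) r, ENNReal.ofReal (s ^ (1 - α) * q s * (φ s / φ (s / 2))) :=
        setLIntegral_mono' measurableSet_Ioc fun s hs => ENNReal.ofReal_le_ofReal (hlow s hs)
    _ ≤ ∫⁻ s in Ioc 0 r, ENNReal.ofReal (s ^ (1 - α) * q s * (φ s / φ (s / 2))) :=
        lintegral_mono_set (Ioc_subset_Ioc_left (half_pos hr).le)

lemma exists_mul_le_rpow_of_lintegral_le {α β c₄ : ℝ} {q φ : ℝ → ℝ}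
    (hq : BddAnti q) (hφ : BddAnti φ)
    (hiv : ∀ r > (1 : ℝ), ∫⁻ s in Ioc (0 : ℝ) r,
        ENNReal.ofReal (s ^ (1 - α) * q s * (φ s / φ (s / 2))) ≤
          ENNReal.ofReal (c₄ * r ^ (2 - β))) :
    ∃ K, ∀ r > (1 : ℝ), q r * φ r ≤ K * r ^ (α - β) := by
  set m : ℝ := min 1 ((2 : ℝ) ^ (-(1 - α)))
  have hm : 0 < m := lt_min one_pos (Real.rpow_pos_of_pos two_pos _)
  have hφ0 : 0 < φ 0 := hφ.pos le_rfl
  refine ⟨2 * c₄ * φ 0 / m, fun r hr => ?_⟩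
  have hr0 : 0 < r := one_pos.trans hr
  have hqr := hq.pos hr0.le
  have hφr := hφ.pos hr0.le
  have hint : m * r ^ (1 - α) * q r * (φ r / φ 0) * (r / 2) ≤ c₄ * r ^ (2 - β) :=
    (ENNReal.ofReal_le_ofReal_iff'.1
      ((ofReal_le_lintegral_Ioc_rpow_mul_div hq hφ hr0).trans (hiv r hr))).resolve_right
      (by positivity : (0 : ℝ) < _).not_ge
  have hY : 0 < r ^ (1 - α) * r / (2 * φ 0) := by positivity
  have hlhs : m * r ^ (1 - α) * q r * (φ r / φ 0) * (r / 2)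
      = r ^ (1 - α) * r / (2 * φ 0) * (m * (q r * φ r)) := by
    field_simp
  have hrhs : c₄ * r ^ (2 - β) = r ^ (1 - α) * r / (2 * φ 0) * (2 * c₄ * φ 0 * r ^ (α - β)) := by
    rw [show 2 - β = 1 - α + 1 + (α - β) by ring, Real.rpow_add hr0, Real.rpow_add_one hr0.ne']
    field_simp
  rw [div_mul_eq_mul_div, le_div_iff₀ hm, mul_comm]
  exact le_of_mul_le_mul_left (hlhs ▸ hrhs ▸ hint) hY

theorem statement9_general {d : ℕ} (α β c₄ : ℝ) (hα : 0 < α)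
    (q φ : ℝ → ℝ) (hq : BddAnti q) (hφ : BddAnti φ)
    (ν μ : Measure (Euc d)) [IsFiniteMeasure μ]
    (hdom : RadialDom ν μ α q φ) (hμ : μ (sphere (0 : Euc d) 1)ᶜ = 0)
    (hiv : ∀ r > (1:ℝ), ∫⁻ s in Set.Ioc (0:ℝ) r,
        ENNReal.ofReal (s ^ (1-α) * q s * (φ s / φ (s/2))) ≤ ENNReal.ofReal (c₄ * r ^ (2-β))) :
    ∃ C > (0:ℝ),
      (∀ r : ℝ, 0 < r → r ≤ 1 →
        ν (ball (0 : Euc d) r)ᶜ ≤ ENNReal.ofReal (C * r ^ (-α))) ∧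
      (∀ r : ℝ, 1 < r →
        ν (ball (0 : Euc d) r)ᶜ ≤ ENNReal.ofReal (C * r ^ (-β))) := by
  obtain ⟨K, hK⟩ := exists_mul_le_rpow_of_lintegral_le hq hφ hiv
  set B := max (q 0 * φ 0) K
  set C := (μ univ).toReal / α * B + 1
  have hB : 0 < B := lt_max_of_lt_left ((hq.mul hφ).pos le_rfl)
  have htail : ∀ r > 0, ∀ γ : ℝ, q r * φ r * r ^ (-α) ≤ B * r ^ (-γ) →
      ν (ball (0 : Euc d) r)ᶜ ≤ ENNReal.ofReal (C * r ^ (-γ)) := by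
    intro r hr γ h
    refine (hdom.measure_compl_ball_le hμ hα hq hφ hr).trans (ENNReal.ofReal_le_ofReal ?_)
    have := mul_le_mul_of_nonneg_left h (by positivity : 0 ≤ (μ univ).toReal / α)
    nlinarith [Real.rpow_nonneg hr.le (-γ)]
  refine ⟨C, by positivity, fun r hr _ => htail r hr α ?_,
    fun r hr => htail r (one_pos.trans hr) β ?_⟩
  · gcongr
    exact ((hq.mul hφ).apply_le_apply_zero hr.le).trans (le_max_left _ _)
  · calc q r * φ r * r ^ (-α) ≤ K * r ^ (α - β) * r ^ (-α) :=
          mul_le_mul_of_nonneg_right (hK r hr) (Real.rpow_nonneg (one_pos.trans hr).le _)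
      _ = K * r ^ (-β) := by rw [mul_assoc, ← Real.rpow_add (one_pos.trans hr)]; ring_nf
      _ ≤ B * r ^ (-β) := by gcongr; exact le_max_right _ _

/-- Under the radial domination (i) with bounded nonincreasing `q, φ`,
the submultiplicativity (iii) and the integral condition (iv), there is `C > 0` with
`ν(B(0,r)^c) ≤ C r^{−α}` for `0 < r ≤ 1` and `ν(B(0,r)^c) ≤ C r^{−β}` for `r > 1`. -/
theorem statement9 {d : ℕ} (α β κ₂ c₄ : ℝ) (hα : 0 < α) (hα2 : α < 2)
    (hαβ : α ≤ β) (hβ2 : β ≤ 2) (hκ₂ : 0 < κ₂) (hc₄ : 0 ≤ c₄)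
    (q φ : ℝ → ℝ) (hq : BddAnti q) (hφ : BddAnti φ)
    (hφmul : ∀ a b : ℝ, 0 ≤ a → 0 ≤ b → φ a * φ b ≤ κ₂ * φ (a+b))
    (ν μ : Measure (Euc d)) [IsFiniteMeasure μ] (hlevy : IsLevyMeasure ν)
    (hdom : RadialDom ν μ α q φ) (hμ : μ (sphere (0 : Euc d) 1)ᶜ = 0)
    (hiv : ∀ r > (1:ℝ), ∫⁻ s in Set.Ioc (0:ℝ) r,
        ENNReal.ofReal (s ^ (1-α) * q s * (φ s / φ (s/2))) ≤ ENNReal.ofReal (c₄ * r ^ (2-β))) :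
    ∃ C > (0:ℝ),
      (∀ r : ℝ, 0 < r → r ≤ 1 →
        ν (ball (0 : Euc d) r)ᶜ ≤ ENNReal.ofReal (C * r ^ (-α))) ∧
      (∀ r : ℝ, 1 < r →
        ν (ball (0 : Euc d) r)ᶜ ≤ ENNReal.ofReal (C * r ^ (-β))) :=
  statement9_general α β c₄ hα q φ hq hφ ν μ hdom hμ hiv
end
end

section
/- Let ν be a Lévy measure on ℝ^d satisfying assumptions (ii), (iii), (iv) below, with α ∈ (0,2) and β ∈ [α,2], and set ψ(r) = |μ| φ(0) ∫_r^∞ s^{−1−α} q(s) φ(s)/φ(s/2) ds and h(t) = min(t^{1/α}, t^{1/β}). Then there exists a constant c > 0 such that ψ(h(t)) ≤ c/t for all t > 0. -/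
open MeasureTheory Metric Set
open scoped ENNReal RealInnerProductSpace

noncomputable section

/-- `ψ(r) = |μ| φ(0) ∫_r^∞ s^{−1−α} q(s) φ(s)/φ(s/2) ds`. -/
def psi {d : ℕ} (μ : Measure (Euc d)) (α : ℝ) (q φ : ℝ → ℝ) (r : ℝ) : ℝ :=
  (μ Set.univ).toReal * φ 0 * ∫ s in Set.Ioi r, s ^ (-1-α) * q s * (φ s / φ (s/2))

lemma st10_aux_trivial {α Cb : ℝ} (hα : 0 < α) {q φ : ℝ → ℝ}
    (hφpos : ∀ s, 0 ≤ s → 0 < φ s)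
    (hφanti : ∀ s t, 0 ≤ s → s ≤ t → φ t ≤ φ s)
    (hqCb : ∀ s, 0 ≤ s → q s ≤ Cb) (hq0 : ∀ s, 0 ≤ s → 0 < q s)
    {r : ℝ} (hr : 0 < r) :
    ∫⁻ s in Set.Ioi r, ENNReal.ofReal (s ^ (-1-α) * q s * (φ s / φ (s/2)))
      ≤ ENNReal.ofReal (Cb / α * r ^ (-α)) := by
  have hCb : 0 < Cb := lt_of_lt_of_le (hq0 0 le_rfl) (hqCb 0 le_rfl)
  have step1 : ∫⁻ s in Set.Ioi r, ENNReal.ofReal (s ^ (-1-α) * q s * (φ s / φ (s/2)))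
      ≤ ∫⁻ s in Set.Ioi r, ENNReal.ofReal (Cb * s ^ (-1-α)) := by
    refine lintegral_mono_ae ((ae_restrict_iff' measurableSet_Ioi).2 (ae_of_all _ ?_))
    intro s hs
    have hs0 : (0:ℝ) < s := hr.trans hs
    refine ENNReal.ofReal_le_ofReal ?_
    have hratio : φ s / φ (s/2) ≤ 1 := by
      have h1 : φ s ≤ φ (s/2) := hφanti (s/2) s (by linarith) (by linarith)
      have h2 : 0 < φ (s/2) := hφpos _ (by linarith)
      exact (div_le_one h2).2 h1
    have hratio0 : 0 ≤ φ s / φ (s/2) :=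
      div_nonneg (hφpos s hs0.le).le (hφpos _ (by linarith)).le
    have hrp : (0:ℝ) ≤ s ^ (-1-α) := (Real.rpow_pos_of_pos hs0 _).le
    calc s ^ (-1-α) * q s * (φ s / φ (s/2)) ≤ s ^ (-1-α) * q s * 1 := by
          apply mul_le_mul_of_nonneg_left hratio
          exact mul_nonneg hrp (hq0 s hs0.le).le
      _ = q s * s ^ (-1-α) := by ring
      _ ≤ Cb * s ^ (-1-α) := mul_le_mul_of_nonneg_right (hqCb s hs0.le) hrp
  have hint : IntegrableOn (fun s : ℝ => s ^ (-1-α)) (Set.Ioi r) :=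
    integrableOn_Ioi_rpow_of_lt (by linarith) hr
  have hint2 : IntegrableOn (fun s : ℝ => Cb * s ^ (-1-α)) (Set.Ioi r) := hint.const_mul Cb
  have hnn : 0 ≤ᵐ[volume.restrict (Set.Ioi r)] fun s : ℝ => Cb * s ^ (-1-α) := by
    refine (ae_restrict_iff' measurableSet_Ioi).2 (ae_of_all _ fun s hs => ?_)
    exact mul_nonneg hCb.le (Real.rpow_pos_of_pos (hr.trans hs) _).le
  have step2 : ∫⁻ s in Set.Ioi r, ENNReal.ofReal (Cb * s ^ (-1-α))
      = ENNReal.ofReal (∫ s in Set.Ioi r, Cb * s ^ (-1-α)) :=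
    (ofReal_integral_eq_lintegral_ofReal hint2 hnn).symm
  have step3 : (∫ s in Set.Ioi r, Cb * s ^ (-1-α)) = Cb / α * r ^ (-α) := by
    rw [integral_const_mul, integral_Ioi_rpow_of_lt (by linarith) hr]
    have : (-1-α) + 1 = -α := by ring
    rw [this]
    field_simp
  rw [step2, step3] at step1
  exact step1

lemma st10_aux_dyadic {α β c₄ : ℝ} (hα : 0 < α) (hβ : 0 < β) (hβ2 : β ≤ 2) (hc₄ : 0 ≤ c₄)
    {q φ : ℝ → ℝ}
    (hφpos : ∀ s, 0 ≤ s → 0 < φ s) (hq0 : ∀ s, 0 ≤ s → 0 < q s)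
    (hiv : ∀ r > (1:ℝ), ∫⁻ s in Set.Ioc (0:ℝ) r,
        ENNReal.ofReal (s ^ (1-α) * q s * (φ s / φ (s/2))) ≤ ENNReal.ofReal (c₄ * r ^ (2-β)))
    {r : ℝ} (hr : 1 < r) :
    ∫⁻ s in Set.Ioi r, ENNReal.ofReal (s ^ (-1-α) * q s * (φ s / φ (s/2)))
      ≤ ENNReal.ofReal (4 * c₄ / (1 - 2 ^ (-β)) * r ^ (-β)) := by
  classical
  have hr0 : (0:ℝ) < r := lt_trans one_pos hr
  have h2 : (0:ℝ) < 2 := two_pos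
  -- the dyadic cover
  have hcover : Set.Ioi r ⊆ ⋃ k : ℕ,
      Set.Ioc ((2:ℝ) ^ ((k:ℕ):ℝ) * r) ((2:ℝ) ^ (((k:ℕ):ℝ) + 1) * r) := by
    intro s hs
    have hs' : r < s := hs
    obtain ⟨n, hn⟩ := pow_unbounded_of_one_lt (s / r) (one_lt_two (α := ℝ))
    have hP : ∃ m : ℕ, s ≤ (2:ℝ) ^ (((m:ℕ):ℝ) + 1) * r := by
      refine ⟨n, ?_⟩
      have h1 : s < 2 ^ n * r := by
        rw [div_lt_iff₀ hr0] at hn; linarith [hn]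
      have h2n : ((2:ℝ) ^ n : ℝ) ≤ (2:ℝ) ^ (((n:ℕ):ℝ) + 1) := by
        rw [← Real.rpow_natCast (2:ℝ) n]
        exact Real.rpow_le_rpow_of_exponent_le one_le_two (by linarith)
      nlinarith
    set k := Nat.find hP with hkdef
    have hk1 : s ≤ (2:ℝ) ^ (((k:ℕ):ℝ) + 1) * r := Nat.find_spec hP
    have hk0 : (2:ℝ) ^ (((k:ℕ):ℝ)) * r < s := by
      rcases Nat.eq_zero_or_pos k with hk | hk
      · simpa [hk] using hs'
      · obtain ⟨m, hm⟩ := Nat.exists_eq_succ_of_ne_zero hk.ne'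
        have := Nat.find_min hP (by omega : m < k)
        push_neg at this
        have hcast : ((m:ℝ) + 1) = (k:ℝ) := by rw [hm]; push_cast; ring
        rwa [hcast] at this
    exact Set.mem_iUnion.2 ⟨k, hk0, hk1⟩
  refine le_trans (lintegral_mono_set hcover) ?_
  refine le_trans (lintegral_iUnion_le _ _) ?_
  -- per-piece bound
  have hk : ∀ k : ℕ,
      (∫⁻ s in Set.Ioc ((2:ℝ) ^ ((k:ℕ):ℝ) * r) ((2:ℝ) ^ (((k:ℕ):ℝ) + 1) * r),
        ENNReal.ofReal (s ^ (-1-α) * q s * (φ s / φ (s/2))))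
      ≤ ENNReal.ofReal (4 * c₄ * r ^ (-β)) * (ENNReal.ofReal ((2:ℝ) ^ (-β))) ^ k := by
    intro k
    set a : ℝ := (2:ℝ) ^ ((k:ℕ):ℝ) * r with hadef
    set b : ℝ := (2:ℝ) ^ (((k:ℕ):ℝ) + 1) * r with hbdef
    have ha : 0 < a := mul_pos (Real.rpow_pos_of_pos h2 _) hr0
    have hb1 : 1 < b := by
      have h1 : (1:ℝ) ≤ (2:ℝ) ^ (((k:ℕ):ℝ) + 1) := by
        have := Real.rpow_le_rpow_of_exponent_le one_le_two
          (by positivity : (0:ℝ) ≤ ((k:ℕ):ℝ) + 1)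
        simpa using this
      nlinarith
    have hpt : ∀ s ∈ Set.Ioc a b,
        ENNReal.ofReal (s ^ (-1-α) * q s * (φ s / φ (s/2)))
          ≤ ENNReal.ofReal (a ^ (-2:ℝ)) *
            ENNReal.ofReal (s ^ (1-α) * q s * (φ s / φ (s/2))) := by
      intro s hs
      have hs0 : (0:ℝ) < s := ha.trans hs.1
      rw [← ENNReal.ofReal_mul (Real.rpow_pos_of_pos ha _).le]
      refine ENNReal.ofReal_le_ofReal ?_
      have hmono : s ^ (-2:ℝ) ≤ a ^ (-2:ℝ) :=
        Real.rpow_le_rpow_of_nonpos ha hs.1.le (by norm_num)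
      have hw : 0 ≤ s ^ (1-α) * q s * (φ s / φ (s/2)) := by
        have := hq0 s hs0.le
        have := hφpos s hs0.le
        have := hφpos (s/2) (by linarith)
        positivity
      have hsplit : s ^ (-1-α) = s ^ (-2:ℝ) * s ^ (1-α) := by
        rw [← Real.rpow_add hs0]; ring_nf
      calc s ^ (-1-α) * q s * (φ s / φ (s/2))
          = s ^ (-2:ℝ) * (s ^ (1-α) * q s * (φ s / φ (s/2))) := by rw [hsplit]; ring
        _ ≤ a ^ (-2:ℝ) * (s ^ (1-α) * q s * (φ s / φ (s/2))) :=
            mul_le_mul_of_nonneg_right hmono hw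
    calc (∫⁻ s in Set.Ioc a b, ENNReal.ofReal (s ^ (-1-α) * q s * (φ s / φ (s/2))))
        ≤ ∫⁻ s in Set.Ioc a b, ENNReal.ofReal (a ^ (-2:ℝ)) *
            ENNReal.ofReal (s ^ (1-α) * q s * (φ s / φ (s/2))) := by
          refine lintegral_mono_ae ((ae_restrict_iff' measurableSet_Ioc).2 (ae_of_all _ hpt))
      _ = ENNReal.ofReal (a ^ (-2:ℝ)) *
            ∫⁻ s in Set.Ioc a b, ENNReal.ofReal (s ^ (1-α) * q s * (φ s / φ (s/2))) :=
          lintegral_const_mul' _ _ ENNReal.ofReal_ne_top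
      _ ≤ ENNReal.ofReal (a ^ (-2:ℝ)) *
            ∫⁻ s in Set.Ioc (0:ℝ) b, ENNReal.ofReal (s ^ (1-α) * q s * (φ s / φ (s/2))) := by
          gcongr
      _ ≤ ENNReal.ofReal (a ^ (-2:ℝ)) * ENNReal.ofReal (c₄ * b ^ (2-β)) := by
          gcongr
          exact hiv b hb1
      _ = ENNReal.ofReal (a ^ (-2:ℝ) * (c₄ * b ^ (2-β))) :=
          (ENNReal.ofReal_mul (Real.rpow_pos_of_pos ha _).le).symm
      _ ≤ ENNReal.ofReal (4 * c₄ * r ^ (-β)) * (ENNReal.ofReal ((2:ℝ) ^ (-β))) ^ k := by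
          rw [← ENNReal.ofReal_pow (Real.rpow_pos_of_pos h2 _).le,
            ← ENNReal.ofReal_mul (by positivity)]
          refine ENNReal.ofReal_le_ofReal ?_
          -- the key real computation
          have e1 : a ^ (-2:ℝ) = 2 ^ (((k:ℕ):ℝ) * (-2)) * r ^ (-2:ℝ) := by
            rw [hadef, Real.mul_rpow (Real.rpow_pos_of_pos h2 _).le hr0.le,
              Real.rpow_mul h2.le]
          have e2 : b ^ (2-β) = 2 ^ ((((k:ℕ):ℝ) + 1) * (2-β)) * r ^ (2-β) := by
            rw [hbdef, Real.mul_rpow (Real.rpow_pos_of_pos h2 _).le hr0.le,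
              Real.rpow_mul h2.le]
          have e3 : ((2:ℝ) ^ (-β)) ^ k = 2 ^ (-β * ((k:ℕ):ℝ)) := by
            rw [← Real.rpow_natCast ((2:ℝ) ^ (-β)) k, ← Real.rpow_mul h2.le]
          rw [e1, e2, e3]
          have e4 : 2 ^ (((k:ℕ):ℝ) * (-2)) * r ^ (-2:ℝ) *
              (c₄ * (2 ^ ((((k:ℕ):ℝ) + 1) * (2-β)) * r ^ (2-β)))
              = c₄ * ((2:ℝ) ^ (((k:ℕ):ℝ) * (-2)) * 2 ^ ((((k:ℕ):ℝ) + 1) * (2-β))) *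
                (r ^ (-2:ℝ) * r ^ (2-β)) := by ring
          rw [e4, ← Real.rpow_add h2, ← Real.rpow_add hr0]
          have e5 : ((k:ℕ):ℝ) * (-2) + (((k:ℕ):ℝ) + 1) * (2-β)
              = (2-β) + (-β * ((k:ℕ):ℝ)) := by ring
          have e6 : (-2:ℝ) + (2-β) = -β := by ring
          rw [e5, e6, Real.rpow_add h2]
          have h4 : (2:ℝ) ^ ((2:ℝ)-β) ≤ 4 := by
            have h := Real.rpow_le_rpow_of_exponent_le (one_le_two (α := ℝ))
              (show (2:ℝ)-β ≤ ((2:ℕ):ℝ) by push_cast; linarith)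
            rwa [Real.rpow_natCast, show ((2:ℝ)^(2:ℕ)) = 4 by norm_num] at h
          have hp1 : (0:ℝ) < 2 ^ (-β * ((k:ℕ):ℝ)) := Real.rpow_pos_of_pos h2 _
          have hp2 : (0:ℝ) ≤ r ^ (-β) := (Real.rpow_pos_of_pos hr0 _).le
          nlinarith [mul_nonneg (mul_nonneg hc₄ hp1.le) hp2]
  refine le_trans (ENNReal.tsum_le_tsum hk) ?_
  rw [ENNReal.tsum_mul_left, ENNReal.tsum_geometric]
  have hx1 : (2:ℝ) ^ (-β) < 1 :=
    Real.rpow_lt_one_of_one_lt_of_neg one_lt_two (by linarith)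
  have hx0 : (0:ℝ) < (2:ℝ) ^ (-β) := Real.rpow_pos_of_pos h2 _
  have hD : (0:ℝ) < 1 - 2 ^ (-β) := by linarith
  have hsub : (1:ℝ≥0∞) - ENNReal.ofReal ((2:ℝ) ^ (-β)) = ENNReal.ofReal (1 - 2 ^ (-β)) := by
    rw [ENNReal.ofReal_sub 1 hx0.le, ENNReal.ofReal_one]
  rw [hsub, ← ENNReal.ofReal_inv_of_pos hD, ← ENNReal.ofReal_mul (by positivity)]
  refine ENNReal.ofReal_le_ofReal (le_of_eq ?_)
  field_simp

/-- Under (ii), (iii), (iv) with `α ∈ (0,2)`, `β ∈ [α,2]`, and with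
`h(t) = min(t^{1/α}, t^{1/β})`, there is `c > 0` with `ψ(h(t)) ≤ c/t` for all `t > 0`. -/
theorem statement10 {d : ℕ} (α β κ₁ κ₂ c₄ : ℝ) (hα : 0 < α) (hα2 : α < 2)
    (hαβ : α ≤ β) (hβ2 : β ≤ 2) (hκ₁ : 0 < κ₁) (hκ₂ : 0 < κ₂) (hc₄ : 0 ≤ c₄)
    (q φ : ℝ → ℝ) (hq : BddAnti q) (hφ : BddAnti φ)
    (hqdbl : ∀ s > (0:ℝ), q s ≤ κ₁ * q (2*s))
    (hφmul : ∀ a b : ℝ, 0 ≤ a → 0 ≤ b → φ a * φ b ≤ κ₂ * φ (a+b))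
    (μ : Measure (Euc d)) [IsFiniteMeasure μ]
    (hiv : ∀ r > (1:ℝ), ∫⁻ s in Set.Ioc (0:ℝ) r,
        ENNReal.ofReal (s ^ (1-α) * q s * (φ s / φ (s/2))) ≤ ENNReal.ofReal (c₄ * r ^ (2-β))) :
    ∃ c > (0:ℝ), ∀ t > (0:ℝ),
      psi μ α q φ (min (t ^ (1/α)) (t ^ (1/β))) ≤ c / t := by
  obtain ⟨hq0, ⟨Cb, hCb⟩, hqanti⟩ := hq
  obtain ⟨hφ0, hφbd, hφanti⟩ := hφ
  have hβ : 0 < β := lt_of_lt_of_le hα hαβ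
  have hK : 0 ≤ (μ Set.univ).toReal * φ 0 :=
    mul_nonneg ENNReal.toReal_nonneg (hφ0 0 le_rfl).le
  set K := (μ Set.univ).toReal * φ 0 with hKdef
  have hCb0 : 0 < Cb := lt_of_lt_of_le (hq0 0 le_rfl) (hCb 0 le_rfl)
  have hx1 : (2:ℝ) ^ (-β) < 1 :=
    Real.rpow_lt_one_of_one_lt_of_neg one_lt_two (by linarith)
  have hx0 : (0:ℝ) < (2:ℝ) ^ (-β) := Real.rpow_pos_of_pos two_pos _
  have hD : (0:ℝ) < 1 - 2 ^ (-β) := by linarith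
  set M1 := Cb / α with hM1def
  set M2 := 4 * c₄ / (1 - 2 ^ (-β)) with hM2def
  have hM1 : 0 ≤ M1 := by positivity
  have hM2 : 0 ≤ M2 := by positivity
  refine ⟨K * M1 + K * M2 + 1, by positivity, ?_⟩
  intro t ht
  set r := min (t ^ (1/α)) (t ^ (1/β)) with hrdef
  have hrpos : 0 < r := lt_min (Real.rpow_pos_of_pos ht _) (Real.rpow_pos_of_pos ht _)
  have hcpos : (0:ℝ) < K * M1 + K * M2 + 1 := by positivity
  have hct : 0 ≤ (K * M1 + K * M2 + 1) / t := div_nonneg hcpos.le ht.le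
  by_cases hInt : IntegrableOn (fun s : ℝ => s ^ (-1-α) * q s * (φ s / φ (s/2))) (Set.Ioi r)
  swap
  · simp only [psi, ← hrdef, ← hKdef]
    rw [integral_undef hInt, mul_zero]
    exact hct
  have hnn : 0 ≤ᵐ[volume.restrict (Set.Ioi r)]
      fun s : ℝ => s ^ (-1-α) * q s * (φ s / φ (s/2)) := by
    refine (ae_restrict_iff' measurableSet_Ioi).2 (ae_of_all _ fun s hs => ?_)
    have hs0 : (0:ℝ) < s := hrpos.trans hs
    have h1 := hq0 s hs0.le
    have h2 := hφ0 s hs0.le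
    have h3 := hφ0 (s/2) (by linarith)
    have h4 : (0:ℝ) < s ^ (-1-α) := Real.rpow_pos_of_pos hs0 _
    positivity
  have heq : (∫ s in Set.Ioi r, s ^ (-1-α) * q s * (φ s / φ (s/2)))
      = (∫⁻ s in Set.Ioi r, ENNReal.ofReal (s ^ (-1-α) * q s * (φ s / φ (s/2)))).toReal :=
    integral_eq_lintegral_of_nonneg_ae hnn hInt.aestronglyMeasurable
  have hinv : 0 < t⁻¹ := inv_pos.2 ht
  rcases le_or_gt t 1 with h1 | h1
  · -- small t : r = t^(1/α)
    have hmin : r = t ^ (1/α) := min_eq_left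
      (Real.rpow_le_rpow_of_exponent_ge ht h1 (one_div_le_one_div_of_le hα hαβ))
    have hra : r ^ (-α) = t⁻¹ := by
      rw [hmin, ← Real.rpow_mul ht.le, show 1/α * (-α) = -1 by field_simp,
        Real.rpow_neg_one]
    have hb := st10_aux_trivial hα hφ0 hφanti hCb hq0 hrpos (q := q) (φ := φ)
    have htr : (∫⁻ s in Set.Ioi r,
        ENNReal.ofReal (s ^ (-1-α) * q s * (φ s / φ (s/2)))).toReal ≤ M1 * t⁻¹ := by
      refine ENNReal.toReal_le_of_le_ofReal (by positivity) ?_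
      rw [← hra]; exact hb
    simp only [psi, ← hrdef, ← hKdef]
    rw [heq, div_eq_mul_inv]
    calc K * (∫⁻ s in Set.Ioi r,
          ENNReal.ofReal (s ^ (-1-α) * q s * (φ s / φ (s/2)))).toReal
        ≤ K * (M1 * t⁻¹) := mul_le_mul_of_nonneg_left htr hK
      _ = (K * M1) * t⁻¹ := by ring
      _ ≤ (K * M1 + K * M2 + 1) * t⁻¹ := by
          refine mul_le_mul_of_nonneg_right ?_ hinv.le
          nlinarith [mul_nonneg hK hM2]
  · -- large t : r = t^(1/β)
    have hmin : r = t ^ (1/β) := min_eq_right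
      (Real.rpow_le_rpow_of_exponent_le h1.le (one_div_le_one_div_of_le hα hαβ))
    have hr1 : 1 < r := by
      rw [hmin]
      exact Real.one_lt_rpow_iff_of_pos ht |>.2 (Or.inl ⟨h1, by positivity⟩)
    have hrb : r ^ (-β) = t⁻¹ := by
      rw [hmin, ← Real.rpow_mul ht.le, show 1/β * (-β) = -1 by field_simp,
        Real.rpow_neg_one]
    have hb := st10_aux_dyadic hα hβ hβ2 hc₄ hφ0 hq0 hiv hr1 (q := q) (φ := φ)
    have htr : (∫⁻ s in Set.Ioi r,
        ENNReal.ofReal (s ^ (-1-α) * q s * (φ s / φ (s/2)))).toReal ≤ M2 * t⁻¹ := by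
      refine ENNReal.toReal_le_of_le_ofReal (by positivity) ?_
      rw [← hrb]; exact hb
    simp only [psi, ← hrdef, ← hKdef]
    rw [heq, div_eq_mul_inv]
    calc K * (∫⁻ s in Set.Ioi r,
          ENNReal.ofReal (s ^ (-1-α) * q s * (φ s / φ (s/2)))).toReal
        ≤ K * (M2 * t⁻¹) := mul_le_mul_of_nonneg_left htr hK
      _ = (K * M2) * t⁻¹ := by ring
      _ ≤ (K * M1 + K * M2 + 1) * t⁻¹ := by
          refine mul_le_mul_of_nonneg_right ?_ hinv.le
          nlinarith [mul_nonneg hK hM1]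

end
end

section
/- Let γ > 0, a, b > 0 and g(s) = exp(−a s log(1 + b s)) for s ≥ 0. Let λ be a Borel measure on ℝ^d with total mass λ(ℝ^d) ≤ 1 such that, for some K ≥ 0, λ(B(x,ρ)) ≤ K ρ^γ for all x ≠ 0 and all 0 < ρ < |x|/2. Then there is a constant C, depending only on a, b, γ, such that for every h > 0 and every x ∈ ℝ^d \ {0}, ∫ g(|x − y|/h) λ(dy) ≤ C ( K h^γ + g(|x|/(2h)) ). -/
/-!
Split the integral at the ball `B(x, R)`, `R = |x|/2`. Outside it `g(|x - y|/h) ≤ g(|x|/(2h))` and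
`λ` has mass at most `1`. Inside it, cut `B(x, R) \ {x}` into the dyadic shells
`R 2^{-k-1} ≤ |x - y| < R 2^{-k}` (the centre is `λ`-null by the ball bound): the `k`-th shell
contributes at most `g(R 2^{-k-1}/h) K (R 2^{-k})^γ = K (2h)^γ ψ(t 2^{-k})` with `t = R/(2h)` and
`ψ(s) = s^γ g(s)`. Since `g ≤ 1` and `g(s) ≤ c s^{-2γ}`, `ψ(s) ≤ min(s^γ, c s^{-γ})`, so the dyadic
sums `∑ₖ ψ(t 2^{-k})` are dominated by two geometric series meeting where `t 2^{-k} ≈ 1`, uniformly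
in `t`.
-/

open MeasureTheory Metric Set Filter Topology
open scoped ENNReal

noncomputable def decayKernel (a b s : ℝ) : ℝ := Real.exp (-(a * s * Real.log (1 + b * s)))

section DecayKernel

variable {a b : ℝ}

lemma decayKernel_nonneg (s : ℝ) : 0 ≤ decayKernel a b s := (Real.exp_pos _).le

@[fun_prop] lemma measurable_decayKernel : Measurable (decayKernel a b) := by
  unfold decayKernel; fun_prop

@[simp] lemma decayKernel_zero : decayKernel a b 0 = 1 := by simp [decayKernel]

lemma decayKernel_antitoneOn (ha : 0 ≤ a) (hb : 0 ≤ b) :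
    AntitoneOn (decayKernel a b) (Ici 0) := by
  intro s (hs : 0 ≤ s) t (ht : 0 ≤ t) hst
  have hlog_nonneg : 0 ≤ Real.log (1 + b * s) := Real.log_nonneg (by nlinarith)
  have hlog_le : Real.log (1 + b * s) ≤ Real.log (1 + b * t) :=
    Real.log_le_log (by positivity) (by gcongr)
  unfold decayKernel
  gcongr

lemma decayKernel_le_one (ha : 0 ≤ a) (hb : 0 ≤ b) {s : ℝ} (hs : 0 ≤ s) :
    decayKernel a b s ≤ 1 :=
  decayKernel_zero (a := a) (b := b) ▸ decayKernel_antitoneOn ha hb self_mem_Ici hs hs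

lemma exists_decayKernel_mul_rpow_le (ha : 0 < a) (hb : 0 < b) {p : ℝ} (hp : 0 ≤ p) :
    ∃ c, ∀ s > 0, decayKernel a b s * s ^ p ≤ c := by
  refine ⟨max 1 ((Real.exp (p / a) / b) ^ p), fun s hs => ?_⟩
  by_cases hL : p / a ≤ Real.log (1 + b * s)
  · -- once `log (1 + b s) ≥ p / a`, the exponent `-a s log (1 + b s)` beats `p log s ≤ p s`
    have hps : p * s ≤ a * s * Real.log (1 + b * s) := by
      have := mul_le_mul_of_nonneg_left hL (mul_nonneg ha.le hs.le)
      rwa [show a * s * (p / a) = p * s by field_simp] at this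
    have hlog : p * Real.log s ≤ p * s :=
      mul_le_mul_of_nonneg_left ((Real.log_le_sub_one_of_pos hs).trans (by linarith)) hp
    calc decayKernel a b s * s ^ p
        = Real.exp (p * Real.log s - a * s * Real.log (1 + b * s)) := by
          rw [decayKernel, Real.rpow_def_of_pos hs, ← Real.exp_add]; ring_nf
      _ ≤ Real.exp 0 := Real.exp_le_exp.2 (by linarith)
      _ ≤ _ := by simp
  · have hs₀ : s ≤ Real.exp (p / a) / b := by
      rw [le_div_iff₀ hb]
      have := (Real.log_lt_iff_lt_exp (by positivity)).1 (not_le.1 hL)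
      linarith
    calc decayKernel a b s * s ^ p ≤ 1 * (Real.exp (p / a) / b) ^ p := by
          gcongr
          exact decayKernel_le_one ha.le hb.le hs.le
      _ ≤ _ := by simp

end DecayKernel

lemma ENNReal.tsum_le_of_geometric_bounds {u : ℕ → ℝ≥0∞} {q C₁ C₂ : ℝ≥0∞} (m : ℕ)
    (hlow : ∀ k < m, u k ≤ C₁ * q ^ (m - 1 - k)) (hhigh : ∀ k, u (k + m) ≤ C₂ * q ^ k) :
    ∑' k, u k ≤ (C₁ + C₂) * (1 - q)⁻¹ := by
  calc ∑' k, u k = ∑ k ∈ Finset.range m, u k + ∑' k, u (k + m) :=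
        (ENNReal.summable.sum_add_tsum_nat_add').symm
    _ ≤ ∑ k ∈ Finset.range m, C₁ * q ^ (m - 1 - k) + ∑' k, C₂ * q ^ k := by
        gcongr with k hk
        · exact hlow k (Finset.mem_range.1 hk)
        · exact hhigh k
    _ = C₁ * ∑ k ∈ Finset.range m, q ^ k + C₂ * ∑' k, q ^ k := by
        rw [← Finset.mul_sum, Finset.sum_range_reflect (q ^ ·) m, ENNReal.tsum_mul_left]
    _ ≤ C₁ * ∑' k, q ^ k + C₂ * ∑' k, q ^ k := by gcongr; exact ENNReal.sum_le_tsum _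
    _ = (C₁ + C₂) * (1 - q)⁻¹ := by rw [ENNReal.tsum_geometric, add_mul]

lemma tsum_ofReal_dyadic_le {ψ : ℝ → ℝ} {γ c : ℝ} (hγ : 0 ≤ γ)
    (hψ : ∀ s > 0, 0 ≤ ψ s) (hsmall : ∀ s > 0, ψ s ≤ s ^ γ) (hlarge : ∀ s > 0, ψ s * s ^ γ ≤ c)
    {t : ℝ} (ht : 0 < t) :
    ∑' k : ℕ, ENNReal.ofReal (ψ (t / 2 ^ k)) ≤
      (ENNReal.ofReal c + 1) * (1 - ENNReal.ofReal ((1 / 2) ^ γ))⁻¹ := by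
  have hq (j : ℕ) : ENNReal.ofReal ((1 / 2) ^ γ) ^ j = ENNReal.ofReal ((2 ^ j)⁻¹ ^ γ) := by
    rw [← ENNReal.ofReal_pow (by positivity), Real.rpow_pow_comm (by norm_num), one_div_pow,
      one_div]
  have hex : ∃ m : ℕ, t ≤ 2 ^ m :=
    (pow_unbounded_of_one_lt t one_lt_two).imp fun _ => le_of_lt
  apply ENNReal.tsum_le_of_geometric_bounds (Nat.find hex)
  · intro k hk
    have hlt : (2 : ℝ) ^ (Nat.find hex - 1 - k) ≤ t / 2 ^ k := by
      rw [le_div_iff₀ (by positivity), ← pow_add, Nat.sub_add_cancel (by omega)]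
      exact (not_le.1 (Nat.find_min hex (by omega : Nat.find hex - 1 < Nat.find hex))).le
    have hs : 0 < t / 2 ^ k := by positivity
    rw [hq, ← ENNReal.ofReal_mul' (by positivity)]
    refine ENNReal.ofReal_le_ofReal ?_
    rw [Real.inv_rpow (by positivity), ← div_eq_mul_inv, le_div_iff₀ (by positivity)]
    calc ψ (t / 2 ^ k) * ((2 : ℝ) ^ (Nat.find hex - 1 - k)) ^ γ
        ≤ ψ (t / 2 ^ k) * (t / 2 ^ k) ^ γ := by have := hψ _ hs; gcongr
      _ ≤ c := hlarge _ hs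
  · intro k
    have hle : t / 2 ^ (k + Nat.find hex) ≤ (2 ^ k)⁻¹ := by
      rw [div_le_iff₀ (by positivity), pow_add, inv_mul_cancel_left₀ (by positivity)]
      exact Nat.find_spec hex
    rw [one_mul, hq]
    exact ENNReal.ofReal_le_ofReal ((hsmall _ (by positivity)).trans (by gcongr))

lemma exists_dyadic_shell {r R : ℝ} (hr : 0 < r) (hrR : r < R) :
    ∃ k : ℕ, R / 2 ^ (k + 1) ≤ r ∧ r < R / 2 ^ k := by
  have hex : ∃ k : ℕ, R / 2 ^ (k + 1) ≤ r := by
    obtain ⟨n, hn⟩ := pow_unbounded_of_one_lt (R / r) one_lt_two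
    refine ⟨n, ?_⟩
    rw [div_le_iff₀ (by positivity)]
    rw [div_lt_iff₀ hr] at hn
    nlinarith [mul_le_mul_of_nonneg_left
      (pow_le_pow_right₀ (one_le_two : (1 : ℝ) ≤ 2) (n.le_add_right 1)) hr.le]
  refine ⟨Nat.find hex, Nat.find_spec hex, ?_⟩
  rcases Nat.eq_zero_or_eq_succ_pred (Nat.find hex) with h | h
  · simpa [h] using hrR
  · rw [h]
    exact not_le.1 (Nat.find_min hex (h ▸ Nat.pred_lt_self (by omega)))

section Ball

variable {α : Type*} [MetricSpace α] [MeasurableSpace α] {μ : Measure α} {x : α} {R : ℝ}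

lemma measure_ball_le_of_forall_lt {B : ℝ≥0∞}
    (H : ∀ ρ, 0 < ρ → ρ < R → μ (ball x ρ) ≤ B) : μ (ball x R) ≤ B := by
  have hunion : ball x R = ⋃ n : ℕ, ball x (R - 1 / (n + 1)) := by
    refine Subset.antisymm (fun y hy => ?_)
      (iUnion_subset fun n => ball_subset_ball (by simp; positivity))
    obtain ⟨n, hn⟩ := exists_nat_one_div_lt (sub_pos.2 (mem_ball.1 hy))
    exact mem_iUnion.2 ⟨n, mem_ball.2 (by linarith)⟩
  have hmono : Monotone fun n : ℕ => ball x (R - 1 / (n + 1)) := fun m n hmn =>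
    ball_subset_ball (by gcongr)
  rw [hunion, hmono.measure_iUnion]
  refine iSup_le fun n => ?_
  rcases le_or_gt (R - 1 / (n + 1)) 0 with h | h
  · simp only [ball_eq_empty.2 h, measure_empty, zero_le]
  · exact H _ h (by simp; positivity)

lemma measure_singleton_eq_zero_of_measure_ball_le {K γ : ℝ} (hR : 0 < R) (hγ : 0 < γ)
    (H : ∀ ρ, 0 < ρ → ρ < R → μ (ball x ρ) ≤ ENNReal.ofReal (K * ρ ^ γ)) : μ {x} = 0 := by
  have hlim : Tendsto (fun ρ : ℝ => ENNReal.ofReal (K * ρ ^ γ)) (𝓝[>] 0) (𝓝 0) := by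
    have := ENNReal.tendsto_ofReal (((Real.continuous_rpow_const hγ.le).tendsto 0).const_mul K)
    simpa [Real.zero_rpow hγ.ne'] using this.mono_left nhdsWithin_le_nhds
  refine le_antisymm (ge_of_tendsto hlim ?_) zero_le
  filter_upwards [Ioo_mem_nhdsGT hR] with ρ hρ
  exact (measure_mono (singleton_subset_iff.2 (mem_ball_self hρ.1))).trans (H ρ hρ.1 hρ.2)

variable [OpensMeasurableSpace α]

lemma setLIntegral_ball_le_tsum (hx : μ {x} = 0) {φ : ℝ → ℝ≥0∞} (hφ : AntitoneOn φ (Ioi 0)) :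
    ∫⁻ y in ball x R, φ (dist x y) ∂μ ≤
      ∑' k : ℕ, φ (R / 2 ^ (k + 1)) * μ (ball x (R / 2 ^ k)) := by
  calc ∫⁻ y in ball x R, φ (dist x y) ∂μ
      ≤ ∫⁻ y, ∑' k : ℕ,
          (ball x (R / 2 ^ k)).indicator (fun _ => φ (R / 2 ^ (k + 1))) y ∂μ := by
        rw [← lintegral_indicator measurableSet_ball]
        refine lintegral_mono_ae ?_
        filter_upwards [measure_eq_zero_iff_ae_notMem.1 hx] with y hy
        by_cases hyR : y ∈ ball x R
        · have hr : 0 < dist x y := dist_pos.2 (Ne.symm hy)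
          obtain ⟨k, hk, hk'⟩ := exists_dyadic_shell hr (mem_ball'.1 hyR)
          have hR : 0 < R := hr.trans (mem_ball'.1 hyR)
          rw [indicator_of_mem hyR]
          refine le_trans ?_ (ENNReal.le_tsum k)
          rw [indicator_of_mem (mem_ball'.2 hk')]
          exact hφ (show 0 < R / 2 ^ (k + 1) by positivity) hr hk
        · simp [indicator_of_notMem hyR]
    _ = ∑' k : ℕ, φ (R / 2 ^ (k + 1)) * μ (ball x (R / 2 ^ k)) := by
        rw [lintegral_tsum fun k => (measurable_const.indicator measurableSet_ball).aemeasurable]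
        simp_rw [lintegral_indicator_const measurableSet_ball]

lemma lintegral_le_of_measure_ball_le {K γ : ℝ} (hμ : μ univ ≤ 1) (hR : 0 < R) (hγ : 0 < γ)
    (H : ∀ ρ, 0 < ρ → ρ < R → μ (ball x ρ) ≤ ENNReal.ofReal (K * ρ ^ γ))
    {φ : ℝ → ℝ≥0∞} (hφ : AntitoneOn φ (Ioi 0)) :
    ∫⁻ y, φ (dist x y) ∂μ ≤
      ENNReal.ofReal K * ∑' k : ℕ, φ (R / 2 ^ (k + 1)) * ENNReal.ofReal ((R / 2 ^ k) ^ γ) +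
        φ R := by
  have hball (ρ : ℝ) (hρ : 0 < ρ) (hρR : ρ ≤ R) :
      μ (ball x ρ) ≤ ENNReal.ofReal K * ENNReal.ofReal (ρ ^ γ) := by
    refine measure_ball_le_of_forall_lt fun σ hσ hσρ => (H σ hσ (hσρ.trans_le hρR)).trans ?_
    rw [ENNReal.ofReal_mul' (by positivity)]
    gcongr
  rw [← lintegral_add_compl _ measurableSet_ball (A := ball x R)]
  gcongr ?_ + ?_
  · calc ∫⁻ y in ball x R, φ (dist x y) ∂μ
        ≤ ∑' k : ℕ, φ (R / 2 ^ (k + 1)) * μ (ball x (R / 2 ^ k)) :=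
          setLIntegral_ball_le_tsum (measure_singleton_eq_zero_of_measure_ball_le hR hγ H) hφ
      _ ≤ ∑' k : ℕ,
            φ (R / 2 ^ (k + 1)) * (ENNReal.ofReal K * ENNReal.ofReal ((R / 2 ^ k) ^ γ)) :=
          ENNReal.tsum_le_tsum fun k => by
            gcongr
            exact hball _ (by positivity) (div_le_self hR.le (one_le_pow₀ one_le_two))
      _ = _ := by
          rw [← ENNReal.tsum_mul_left]
          simp_rw [mul_left_comm]
  · calc ∫⁻ y in (ball x R)ᶜ, φ (dist x y) ∂μ ≤ ∫⁻ _ in (ball x R)ᶜ, φ R ∂μ :=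
          setLIntegral_mono measurable_const fun y hy => by
            have hRy : R ≤ dist x y := not_lt.1 (mt mem_ball'.2 hy)
            exact hφ hR (hR.trans_le hRy) hRy
      _ ≤ φ R := by
          rw [setLIntegral_const]
          exact mul_le_of_le_one_right' ((measure_mono (subset_univ _)).trans hμ)

lemma lintegral_decayKernel_dist_le {a b K γ M h : ℝ} (ha : 0 ≤ a) (hb : 0 ≤ b)
    (hμ : μ univ ≤ 1) (hR : 0 < R) (hγ : 0 < γ) (hh : 0 < h)
    (H : ∀ ρ, 0 < ρ → ρ < R → μ (ball x ρ) ≤ ENNReal.ofReal (K * ρ ^ γ))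
    (hM : ∀ t > 0, ∑' k : ℕ,
      ENNReal.ofReal (decayKernel a b (t / 2 ^ k) * (t / 2 ^ k) ^ γ) ≤ ENNReal.ofReal M) :
    ∫⁻ y, ENNReal.ofReal (decayKernel a b (dist x y / h)) ∂μ ≤
      ENNReal.ofReal K * (ENNReal.ofReal ((2 * h) ^ γ) * ENNReal.ofReal M) +
        ENNReal.ofReal (decayKernel a b (R / h)) := by
  set φ : ℝ → ℝ≥0∞ := fun r => ENNReal.ofReal (decayKernel a b (r / h))
  have hφ : AntitoneOn φ (Ioi 0) := fun r (hr : 0 < r) s (hs : 0 < s) hrs =>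
    ENNReal.ofReal_le_ofReal <| decayKernel_antitoneOn ha hb
      (mem_Ici.2 (by positivity)) (mem_Ici.2 (by positivity)) (by gcongr)
  refine (lintegral_le_of_measure_ball_le hμ hR hγ H hφ).trans ?_
  gcongr
  calc _ = ENNReal.ofReal ((2 * h) ^ γ) * ∑' k : ℕ, ENNReal.ofReal
          (decayKernel a b (R / (2 * h) / 2 ^ k) * (R / (2 * h) / 2 ^ k) ^ γ) := by
        rw [← ENNReal.tsum_mul_left]
        congr 1 with k
        have hscale : R / 2 ^ k = 2 * h * (R / (2 * h) / 2 ^ k) := by field_simp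
        have hshift : R / 2 ^ (k + 1) / h = R / (2 * h) / 2 ^ k := by
          rw [pow_succ]; field_simp
        rw [hscale, Real.mul_rpow (by positivity) (by positivity),
          ENNReal.ofReal_mul (by positivity), ENNReal.ofReal_mul (decayKernel_nonneg _)]
        simp only [φ, hshift]
        ring
    _ ≤ _ := by gcongr; exact hM _ (by positivity)

end Ball

lemma exists_tsum_decayKernel_dyadic_le {a b γ : ℝ} (hγ : 0 < γ) (ha : 0 < a) (hb : 0 < b) :
    ∃ M ≥ 0, ∀ t > 0, ∑' k : ℕ,
      ENNReal.ofReal (decayKernel a b (t / 2 ^ k) * (t / 2 ^ k) ^ γ) ≤ ENNReal.ofReal M := by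
  obtain ⟨c, hc⟩ := exists_decayKernel_mul_rpow_le ha hb (p := 2 * γ) (by positivity)
  set M := (ENNReal.ofReal c + 1) * (1 - ENNReal.ofReal ((1 / 2 : ℝ) ^ γ))⁻¹
  have hM : M ≠ ⊤ := by
    refine ENNReal.mul_ne_top (by simp) (ENNReal.inv_ne_top.2 (tsub_pos_of_lt ?_).ne')
    exact ENNReal.ofReal_lt_one.2 (Real.rpow_lt_one (by norm_num) (by norm_num) hγ)
  refine ⟨M.toReal, ENNReal.toReal_nonneg, fun t ht => ?_⟩
  rw [ENNReal.ofReal_toReal hM]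
  refine tsum_ofReal_dyadic_le (ψ := fun s => decayKernel a b s * s ^ γ) hγ.le
    (fun s hs => mul_nonneg (decayKernel_nonneg s) (Real.rpow_nonneg hs.le γ)) (fun s hs => ?_)
    (fun s hs => ?_) ht
  · simpa using mul_le_mul_of_nonneg_right (decayKernel_le_one ha.le hb.le hs.le)
      (Real.rpow_nonneg hs.le γ)
  · rw [mul_assoc, ← Real.rpow_add hs, ← two_mul]
    exact hc s hs

/-- Let `g(s) = exp(−a s log(1+b s))` and let `λ` be a measure of total mass
at most `1` with `λ(B(x,ρ)) ≤ K ρ^γ` for `x ≠ 0`, `0 < ρ < |x|/2`. Then, with a constant `C`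
depending only on `a, b, γ`, for every `h > 0` and `x ≠ 0`,
`∫ g(|x−y|/h) λ(dy) ≤ C (K h^γ + g(|x|/(2h)))`. -/
theorem statement15 (γ a b : ℝ) (hγ : 0 < γ) (ha : 0 < a) (hb : 0 < b) :
    ∃ C > (0:ℝ), ∀ (d : ℕ) (lam : Measure (EuclideanSpace ℝ (Fin d))),
      lam Set.univ ≤ 1 →
      ∀ K : ℝ, 0 ≤ K →
      (∀ x : EuclideanSpace ℝ (Fin d), x ≠ 0 → ∀ ρ : ℝ, 0 < ρ → ρ < ‖x‖ / 2 →
        lam (ball x ρ) ≤ ENNReal.ofReal (K * ρ ^ γ)) →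
      ∀ h : ℝ, 0 < h → ∀ x : EuclideanSpace ℝ (Fin d), x ≠ 0 →
        (∫ y, Real.exp (-(a * (‖x - y‖ / h) * Real.log (1 + b * (‖x - y‖ / h)))) ∂lam) ≤
          C * (K * h ^ γ +
            Real.exp (-(a * (‖x‖ / (2*h)) * Real.log (1 + b * (‖x‖ / (2*h)))))) := by
  obtain ⟨M, hM, hsum⟩ := exists_tsum_decayKernel_dyadic_le hγ ha hb
  refine ⟨2 ^ γ * M + 1, by positivity, fun d lam hmass K hK hball h hh x hx => ?_⟩
  have hR : 0 < ‖x‖ / 2 := by have := norm_pos_iff.2 hx; positivity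
  have hint := lintegral_decayKernel_dist_le ha.le hb.le hmass hR hγ hh (hball x hx) hsum
  simp_rw [← dist_eq_norm]
  change ∫ y, decayKernel a b (dist x y / h) ∂lam ≤ _ * (_ + decayKernel a b (‖x‖ / (2 * h)))
  rw [integral_eq_lintegral_of_nonneg_ae (ae_of_all _ fun y => decayKernel_nonneg _)
    (by fun_prop : Measurable fun y => decayKernel a b (dist x y / h)).aestronglyMeasurable]
  have hg := decayKernel_nonneg (a := a) (b := b) (‖x‖ / (2 * h))
  refine ENNReal.toReal_le_of_le_ofReal (by positivity) ?_
  calc _ ≤ _ := hint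
    _ = ENNReal.ofReal (K * ((2 * h) ^ γ * M) + decayKernel a b (‖x‖ / (2 * h))) := by
      rw [ENNReal.ofReal_add (by positivity) hg, ENNReal.ofReal_mul hK,
        ENNReal.ofReal_mul (by positivity), div_div]
    _ ≤ _ := by
      refine ENNReal.ofReal_le_ofReal ?_
      rw [Real.mul_rpow zero_le_two hh.le]
      nlinarith [mul_nonneg (mul_nonneg (Real.rpow_nonneg zero_le_two γ) hM) hg,
        mul_nonneg hK (Real.rpow_nonneg hh.le γ)]
end
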